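/- Let C be a self-dual code of length n over Z_{2^m}, C_0 a proper subcode of index 2 with C = C_0 ∪ C_2, C_0^⊥ = C_0 ∪ C_1 ∪ C_2 ∪ C_3 where C_1 = s + C_0, C_2 = t + C_0, C_3 = s + t + C_0 (t ∈ C \ C_0, s ∈ C_0^⊥ \ C). Suppose v_1, v_2 ∈ (Z_{2^m})^k satisfy v_1·v_1 ≡ −s·s, v_1·v_2 ≡ −t·s, v_2·v_2 ≡ −t·t (all mod 2^m). Then every element of C* = ⟨(v_1, C_1) ∪ (v_2, C_2)⟩ ⊆ (Z_{2^m})^{n+k} is orthogonal to every other element of C*, i.e., C* is a self-orthogonal code of length n+k. -/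

import Mathlib

open Finset

/-- Standard bilinear (dot) product on `Fin n → R`. -/
def dotp {R : Type*} [CommRing R] {n : ℕ} (u v : Fin n → R) : R := ∑ i, u i * v i

/-- Dual of a set of vectors with respect to the standard bilinear form. -/
def dualCode {R : Type*} [CommRing R] {n : ℕ} (S : Set (Fin n → R)) : Set (Fin n → R) :=
  {v | ∀ u ∈ S, dotp u v = 0}

/-- Euclidean weight of an element of `ZMod N`. -/
def wtE {N : ℕ} (a : ZMod N) : ℕ := min (a.val ^ 2) ((N - a.val) ^ 2)

/-- Euclidean weight of a vector. -/
def wtEv {N n : ℕ} (v : Fin n → ZMod N) : ℕ := ∑ i, wtE (v i)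

/-!
A generator of `C*` has the form `(v, a + c)` with `(v, a)` one of `(v₁, s)`, `(v₂, t)` and
`c ∈ C₀`. Since `s` and `t` lie in `C₀^⊥` and `C₀ ⊆ C = C^⊥` is self-orthogonal, the product of
two generators `(v, a + c)` and `(w, b + c')` collapses to `v·w + a·b`, which the hypotheses on
`v₁, v₂` make zero. Bilinearity carries orthogonality from the generators to the group they span.
-/

open Matrix

section Dotp

variable {R : Type*} [CommRing R]

lemma dotp_eq_dotProduct {n : ℕ} (u v : Fin n → R) : dotp u v = u ⬝ᵥ v := rfl

lemma dotp_comm {n : ℕ} (u v : Fin n → R) : dotp u v = dotp v u := dotProduct_comm u v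

lemma dotp_append {k n : ℕ} (a c : Fin k → R) (b d : Fin n → R) :
    dotp (Fin.append a b) (Fin.append c d) = dotp a c + dotp b d := by
  simp [dotp, Fin.sum_univ_add]

lemma dotp_eq_zero_of_mem_closure {n : ℕ} {S : Set (Fin n → R)}
    (hS : ∀ x ∈ S, ∀ y ∈ S, dotp x y = 0) {x y : Fin n → R}
    (hx : x ∈ AddSubgroup.closure S) (hy : y ∈ AddSubgroup.closure S) : dotp x y = 0 := by
  simp only [dotp_eq_dotProduct] at hS ⊢
  induction hx, hy using AddSubgroup.closure_induction₂ with
  | mem x y hx hy => exact hS x hx y hy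
  | zero_left => exact zero_dotProduct _
  | zero_right => exact dotProduct_zero _
  | add_left _ _ _ _ _ _ h₁ h₂ => rw [add_dotProduct, h₁, h₂, add_zero]
  | add_right _ _ _ _ _ _ h₁ h₂ => rw [dotProduct_add, h₁, h₂, add_zero]
  | neg_left _ _ _ _ h => rw [neg_dotProduct, h, neg_zero]
  | neg_right _ _ _ _ h => rw [dotProduct_neg, h, neg_zero]

lemma dualCode_anti {n : ℕ} {S T : Set (Fin n → R)} (h : S ⊆ T) : dualCode T ⊆ dualCode S :=
  fun _ hv u hu => hv u (h hu)

lemma dotp_append_add_add {k n : ℕ} {S : Set (Fin n → R)} (hS : S ⊆ dualCode S)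
    {a b c c' : Fin n → R} (ha : a ∈ dualCode S) (hb : b ∈ dualCode S) (hc : c ∈ S)
    (hc' : c' ∈ S) (v w : Fin k → R) :
    dotp (Fin.append v (a + c)) (Fin.append w (b + c')) = dotp v w + dotp a b := by
  have hac' : a ⬝ᵥ c' = 0 := (dotProduct_comm a c').trans (ha c' hc')
  have hcb : c ⬝ᵥ b = 0 := hb c hc
  have hcc' : c ⬝ᵥ c' = 0 := hS hc' c hc
  rw [dotp_append, dotp_eq_dotProduct (a + c), add_dotProduct, dotProduct_add, dotProduct_add,
    hac', hcb, hcc', add_zero, add_zero, add_zero]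
  rfl

end Dotp

theorem cstar_self_orthogonal_general (m n k : ℕ)
    (C C0 : AddSubgroup (Fin n → ZMod (2 ^ m)))
    (hC : (C : Set (Fin n → ZMod (2 ^ m))) = dualCode (C : Set (Fin n → ZMod (2 ^ m))))
    (hle : C0 ≤ C)
    (t : Fin n → ZMod (2 ^ m)) (ht : t ∈ C)
    (s : Fin n → ZMod (2 ^ m))
    (hs : s ∈ dualCode (C0 : Set (Fin n → ZMod (2 ^ m))))
    (v1 v2 : Fin k → ZMod (2 ^ m))
    (h11 : dotp v1 v1 = - dotp s s)
    (h12 : dotp v1 v2 = - dotp t s)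
    (h22 : dotp v2 v2 = - dotp t t)
    (Cstar : AddSubgroup (Fin (k + n) → ZMod (2 ^ m)))
    (hCstar : Cstar = AddSubgroup.closure
      ((fun c => Fin.append v1 c) '' ((s + ·) '' (C0 : Set (Fin n → ZMod (2 ^ m)))) ∪
       (fun c => Fin.append v2 c) '' ((t + ·) '' (C0 : Set (Fin n → ZMod (2 ^ m)))))) :
    ∀ x ∈ Cstar, ∀ y ∈ Cstar, dotp x y = 0 := by
  subst hCstar
  have hdual : dualCode (C : Set (Fin n → ZMod (2 ^ m))) ⊆ dualCode C0 := dualCode_anti hle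
  have hC0 : (C0 : Set (Fin n → ZMod (2 ^ m))) ⊆ dualCode C0 := fun c hc => hdual (hC ▸ hle hc)
  have htC0 : t ∈ dualCode (C0 : Set (Fin n → ZMod (2 ^ m))) := hdual (hC ▸ ht)
  refine fun x hx y hy => dotp_eq_zero_of_mem_closure ?_ hx hy
  rintro _ (⟨_, ⟨c, hc, rfl⟩, rfl⟩ | ⟨_, ⟨c, hc, rfl⟩, rfl⟩)
    _ (⟨_, ⟨c', hc', rfl⟩, rfl⟩ | ⟨_, ⟨c', hc', rfl⟩, rfl⟩)
  · rw [dotp_append_add_add hC0 hs hs hc hc', h11, neg_add_cancel]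
  · rw [dotp_append_add_add hC0 hs htC0 hc hc', h12, dotp_comm s t, neg_add_cancel]
  · rw [dotp_append_add_add hC0 htC0 hs hc hc', dotp_comm v2 v1, h12, neg_add_cancel]
  · rw [dotp_append_add_add hC0 htC0 htC0 hc hc', h22, neg_add_cancel]

theorem cstar_self_orthogonal (m n k : ℕ) (hm : 0 < m) (hn : 0 < n)
    (C C0 : AddSubgroup (Fin n → ZMod (2 ^ m)))
    (hC : (C : Set (Fin n → ZMod (2 ^ m))) = dualCode (C : Set (Fin n → ZMod (2 ^ m))))
    (hle : C0 ≤ C) (hidx : Nat.card C = 2 * Nat.card C0)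
    (t : Fin n → ZMod (2 ^ m)) (ht : t ∈ C) (ht0 : t ∉ C0)
    (s : Fin n → ZMod (2 ^ m))
    (hs : s ∈ dualCode (C0 : Set (Fin n → ZMod (2 ^ m)))) (hsC : s ∉ C)
    (v1 v2 : Fin k → ZMod (2 ^ m))
    (h11 : dotp v1 v1 = - dotp s s)
    (h12 : dotp v1 v2 = - dotp t s)
    (h22 : dotp v2 v2 = - dotp t t)
    (Cstar : AddSubgroup (Fin (k + n) → ZMod (2 ^ m)))
    (hCstar : Cstar = AddSubgroup.closure
      ((fun c => Fin.append v1 c) '' ((s + ·) '' (C0 : Set (Fin n → ZMod (2 ^ m)))) ∪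
       (fun c => Fin.append v2 c) '' ((t + ·) '' (C0 : Set (Fin n → ZMod (2 ^ m)))))) :
    ∀ x ∈ Cstar, ∀ y ∈ Cstar, dotp x y = 0 :=
  cstar_self_orthogonal_general m n k C C0 hC hle t ht s hs v1 v2 h11 h12 h22 Cstar hCstar
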